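/- Assume Problem (OP) satisfies the primal quadratic gap property with parameter α_S > 0, that L_ρ has a saddle point with common saddle value L_ρ*, and let β_S be the smoothness parameter of S(·,w). Let λ ≥ 1, let μ > 0 satisfy 2μ(‖𝒜‖+1)² ≤ (√(λα_S² + λ²β_S²) − λβ_S)/(2λ), and set η := α_S/(2λ(β_S + 2μ(‖𝒜‖+1)²)) ∈ (0,1]. Let (q_t, w_t) be generated by: q₀ ∈ dom R_Q, w₀ ∈ E₂; for each t, v_t satisfies Φ₁(v_t) ≤ Φ_λ(q*) for all q* ∈ 𝒫* (the weak proximal oracle condition at (q_t,w_t)); q_{t+1} = (1−η)q_t + η v_t; w_{t+1} = w_t + μ𝒦q_{t+1}. Define d_t := L_ρ(q_t,w_t) − L_ρ*. Then for every t ≥ 1, d_{t+1} ≤ (1−η)ᵗ d₁. -/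

import Mathlib

/-!
The smooth part `q ↦ S(q,w) + μ‖𝒦q‖²` has a `(β_S + 2μ‖𝒦‖²)`-Lipschitz gradient, and the dual
update turns its value at `q_{t+1}` into `S(q_{t+1}, w_{t+1})`; so the descent lemma bounds
`S(q_{t+1}, w_{t+1})` by the linearisation at `q_t` along the step `η (v_t - q_t)`. Testing the
weak proximal oracle condition against the optimal solution `q*` nearest to `q_t`, applying the
primal quadratic gap and convexity of `R_Q` along the step gives `d_{t+1} ≤ (1 - η) d_t` up to two
quadratic error terms. As `𝒦q* = 0` and `‖𝒦‖ ≤ ‖𝒜‖ + 1`, the step-size condition makes each of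
them at most `η α_S ‖q* - q_t‖² / 4`, so both are absorbed by the gap term. The saddle point
shows that every optimal solution has objective value `L_ρ*`.
-/

open scoped RealInnerProductSpace
noncomputable section

variable {E₁ E₂ : Type*}
  [NormedAddCommGroup E₁] [InnerProductSpace ℝ E₁] [FiniteDimensional ℝ E₁]
  [NormedAddCommGroup E₂] [InnerProductSpace ℝ E₂] [FiniteDimensional ℝ E₂]

/-- first component of a point of `E := E₁ ×₂ E₂` -/
def xPart (q : WithLp 2 (E₁ × E₂)) : E₁ := (WithLp.equiv 2 (E₁ × E₂) q).1
/-- second component of a point of `E := E₁ ×₂ E₂` -/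
def yPart (q : WithLp 2 (E₁ × E₂)) : E₂ := (WithLp.equiv 2 (E₁ × E₂) q).2

/-- The constraint map `𝒦(x,y) := 𝒜x − y`, as a continuous linear map. -/
def Kmap (A : E₁ →L[ℝ] E₂) : WithLp 2 (E₁ × E₂) →L[ℝ] E₂ :=
  (A.comp (ContinuousLinearMap.fst ℝ E₁ E₂) - ContinuousLinearMap.snd ℝ E₁ E₂).comp
    (WithLp.prodContinuousLinearEquiv 2 ℝ E₁ E₂).toContinuousLinearMap

/-- The smooth part of the augmented Lagrangian,
`S(q,w) := f(x) + ⟨w, 𝒦q⟩ + (ρ/2)‖𝒦q‖²`. -/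
def SAL (f : E₁ → ℝ) (A : E₁ →L[ℝ] E₂) (ρ : ℝ) (q : WithLp 2 (E₁ × E₂)) (w : E₂) : ℝ :=
  f (xPart q) + ⟪w, Kmap A q⟫ + ρ / 2 * ‖Kmap A q‖ ^ 2

/-- the gradient `∇_q S(q,w)` -/
def gradS (f : E₁ → ℝ) (A : E₁ →L[ℝ] E₂) (ρ : ℝ) (q : WithLp 2 (E₁ × E₂)) (w : E₂) :
    WithLp 2 (E₁ × E₂) :=
  gradient (fun q' => SAL f A ρ q' w) q

/-- objective of Problem (OP): `h(q) := f(x) + R_Q(q)` -/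
def hOP (f : E₁ → ℝ) (RQ : WithLp 2 (E₁ × E₂) → EReal) (q : WithLp 2 (E₁ × E₂)) : EReal :=
  (f (xPart q) : EReal) + RQ q

/-- the augmented Lagrangian `L_ρ(q,w) := h(q) + ⟨w,𝒦q⟩ + (ρ/2)‖𝒦q‖²` -/
def AL (f : E₁ → ℝ) (RQ : WithLp 2 (E₁ × E₂) → EReal) (A : E₁ →L[ℝ] E₂) (ρ : ℝ)
    (q : WithLp 2 (E₁ × E₂)) (w : E₂) : EReal :=
  hOP f RQ q + ((⟪w, Kmap A q⟫ + ρ / 2 * ‖Kmap A q‖ ^ 2 : ℝ) : EReal)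

/-- saddle point of the augmented Lagrangian -/
def IsSaddle (f : E₁ → ℝ) (RQ : WithLp 2 (E₁ × E₂) → EReal) (A : E₁ →L[ℝ] E₂) (ρ : ℝ)
    (qs : WithLp 2 (E₁ × E₂)) (ws : E₂) : Prop :=
  ∀ q : WithLp 2 (E₁ × E₂), ∀ w : E₂,
    AL f RQ A ρ qs w ≤ AL f RQ A ρ qs ws ∧ AL f RQ A ρ qs ws ≤ AL f RQ A ρ q ws

/-- set of optimal solutions of Problem (OP) -/
def OptSet (f : E₁ → ℝ) (RQ : WithLp 2 (E₁ × E₂) → EReal) (A : E₁ →L[ℝ] E₂) :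
    Set (WithLp 2 (E₁ × E₂)) :=
  {q | Kmap A q = 0 ∧ ∀ p, Kmap A p = 0 → hOP f RQ q ≤ hOP f RQ p}

/-- a proper function with values in `(-∞, +∞]` -/
def ProperFun {V : Type*} (R : V → EReal) : Prop :=
  (∃ x, R x ≠ ⊤) ∧ ∀ x, R x ≠ ⊥

/-- convexity for `EReal`-valued functions -/
def ERConvexOn {V : Type*} [AddCommGroup V] [Module ℝ V] (R : V → EReal) : Prop :=
  ∀ x y : V, ∀ a b : ℝ, 0 ≤ a → 0 ≤ b → a + b = 1 →
    R (a • x + b • y) ≤ (a : EReal) * R x + (b : EReal) * R y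

end

section General

variable {F G : Type*} [NormedAddCommGroup F] [InnerProductSpace ℝ F] [CompleteSpace F]
  [NormedAddCommGroup G] [InnerProductSpace ℝ G] [CompleteSpace G]

theorem le_add_inner_add_of_lipschitz_gradient {φ : F → ℝ} {φ' : F → F} {L : ℝ}
    (hφ : ∀ z, HasGradientAt φ (φ' z) z) (hL : ∀ z₁ z₂, ‖φ' z₁ - φ' z₂‖ ≤ L * ‖z₁ - z₂‖)
    (x y : F) : φ y ≤ φ x + ⟪φ' x, y - x⟫ + L / 2 * ‖y - x‖ ^ 2 := by
  set d := y - x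
  let ψ : ℝ → ℝ := fun t => φ (x + t • d) - t * ⟪φ' x, d⟫ - L / 2 * t ^ 2 * ‖d‖ ^ 2
  let ψ' : ℝ → ℝ := fun t => ⟪φ' (x + t • d), d⟫ - ⟪φ' x, d⟫ - L * t * ‖d‖ ^ 2
  have hψ : ∀ t, HasDerivAt ψ (ψ' t) t := by
    intro t
    have hline : HasDerivAt (fun s : ℝ => x + s • d) d t := by
      simpa using ((hasDerivAt_id t).smul_const d).const_add x
    have hcomp := (hφ (x + t • d)).hasFDerivAt.comp_hasDerivAt t hline
    rw [InnerProductSpace.toDual_apply_apply] at hcomp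
    have hquad : HasDerivAt (fun s : ℝ => L / 2 * s ^ 2 * ‖d‖ ^ 2) (L * t * ‖d‖ ^ 2) t :=
      (((hasDerivAt_pow 2 t).const_mul (L / 2)).mul_const (‖d‖ ^ 2)).congr_deriv
        (by push_cast; ring)
    exact (hcomp.sub ((hasDerivAt_id t).mul_const _)).sub hquad |>.congr_deriv (by simp [ψ'])
  have hψ'_nonpos : ∀ t ∈ interior (Set.Icc (0 : ℝ) 1), ψ' t ≤ 0 := by
    intro t ht
    rw [interior_Icc] at ht
    have hdist : ‖(x + t • d) - x‖ = t * ‖d‖ := by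
      rw [add_sub_cancel_left, norm_smul, Real.norm_of_nonneg ht.1.le]
    calc ψ' t = ⟪φ' (x + t • d) - φ' x, d⟫ - L * t * ‖d‖ ^ 2 := by
          simp only [ψ', inner_sub_left]
      _ ≤ ‖φ' (x + t • d) - φ' x‖ * ‖d‖ - L * t * ‖d‖ ^ 2 := by
          gcongr; exact real_inner_le_norm _ _
      _ ≤ L * (t * ‖d‖) * ‖d‖ - L * t * ‖d‖ ^ 2 := by
          gcongr; exact hdist ▸ hL _ _
      _ = 0 := by ring
  have hanti : AntitoneOn ψ (Set.Icc 0 1) :=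
    antitoneOn_of_hasDerivWithinAt_nonpos (convex_Icc 0 1)
      (fun t _ => (hψ t).continuousAt.continuousWithinAt)
      (fun t _ => (hψ t).hasDerivWithinAt) hψ'_nonpos
  have h01 := hanti (by simp) (by simp) zero_le_one
  norm_num [ψ, d, real_inner_comm] at h01
  linarith

theorem hasGradientAt_const_mul_norm_sq_apply (K : F →L[ℝ] G) (c : ℝ) (z : F) :
    HasGradientAt (fun p => c * ‖K p‖ ^ 2) ((2 * c) • (ContinuousLinearMap.adjoint K) (K z)) z := by
  rw [hasGradientAt_iff_hasFDerivAt]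
  refine ((K.hasFDerivAt.norm_sq).const_mul c).congr_fderiv ?_
  ext u
  simp [ContinuousLinearMap.adjoint_inner_left]
  ring

theorem norm_adjoint_apply_apply_le (K : F →L[ℝ] G) (z : F) :
    ‖(ContinuousLinearMap.adjoint K) (K z)‖ ≤ ‖K‖ ^ 2 * ‖z‖ := by
  rw [sq, ← ContinuousLinearMap.norm_adjoint_comp_self]
  exact (ContinuousLinearMap.adjoint K ∘L K).le_opNorm z

end General

theorem EReal.eq_coe_sub_of_add_coe_eq {X : EReal} {a b : ℝ} (h : X + a = b) :
    X = ((b - a : ℝ) : EReal) := by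
  induction X using EReal.rec with
  | bot => simp at h
  | top => simp at h
  | coe x =>
    rw [← EReal.coe_add, EReal.coe_eq_coe_iff] at h
    rw [EReal.coe_eq_coe_iff]; linarith

theorem LowerSemicontinuous.add_of_ne_bot {α : Type*} [TopologicalSpace α] {R S : α → EReal}
    (hR : LowerSemicontinuous R) (hS : LowerSemicontinuous S) (hR' : ∀ x, R x ≠ ⊥)
    (hS' : ∀ x, S x ≠ ⊥) : LowerSemicontinuous fun x => R x + S x :=
  hR.add' hS fun x => EReal.continuousAt_add (Or.inr (hS' x)) (Or.inl (hR' x))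

section ERConvexOn

variable {V W : Type*} [AddCommGroup V] [Module ℝ V] [AddCommGroup W] [Module ℝ W]

theorem ERConvexOn.add {R S : V → EReal} (hR : ERConvexOn R) (hS : ERConvexOn S) :
    ERConvexOn fun x => R x + S x := by
  intro x y a b ha hb hab
  calc R (a • x + b • y) + S (a • x + b • y)
      ≤ (a * R x + b * R y) + (a * S x + b * S y) :=
        add_le_add (hR x y a b ha hb hab) (hS x y a b ha hb hab)
    _ = a * (R x + S x) + b * (R y + S y) := by
        rw [EReal.left_distrib_of_nonneg_of_ne_top (EReal.coe_nonneg.2 ha) (EReal.coe_ne_top a),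
          EReal.left_distrib_of_nonneg_of_ne_top (EReal.coe_nonneg.2 hb) (EReal.coe_ne_top b),
          add_add_add_comm]

theorem ERConvexOn.comp_linearMap {R : W → EReal} (hR : ERConvexOn R) (g : V →ₗ[ℝ] W) :
    ERConvexOn fun x => R (g x) := by
  intro x y a b ha hb hab
  simpa only [map_add, map_smul] using hR (g x) (g y) a b ha hb hab

theorem ERConvexOn.le_coe {R : V → EReal} (hR : ERConvexOn R) {x y : V} {r s t : ℝ}
    (hx : R x = r) (hy : R y = s) (ht₀ : 0 ≤ t) (ht₁ : t ≤ 1) :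
    R ((1 - t) • x + t • y) ≤ ((1 - t) * r + t * s : ℝ) := by
  have h := hR x y (1 - t) t (by linarith) ht₀ (by ring)
  rwa [hx, hy, ← EReal.coe_mul, ← EReal.coe_mul, ← EReal.coe_add] at h

end ERConvexOn

theorem step_size_bounds {α β lam μ η N n : ℝ} (hα : 0 < α) (hβ : 0 ≤ β) (hlam : 0 < lam)
    (hμ : 0 < μ) (hN : 0 < N) (hn₀ : 0 ≤ n) (hnN : n ≤ N)
    (hcond : 2 * μ * N ^ 2 ≤ (√(lam * α ^ 2 + lam ^ 2 * β ^ 2) - lam * β) / (2 * lam))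
    (hη : η = α / (2 * lam * (β + 2 * μ * N ^ 2))) :
    μ * n ^ 2 ≤ η * α / 4 ∧ lam * η * (β + 2 * μ * n ^ 2) ≤ α / 2 := by
  have hη₀ : 0 ≤ η := hη ▸ by positivity
  have hn2 : μ * n ^ 2 ≤ μ * N ^ 2 := by gcongr
  have hlamη : lam * η * (β + 2 * μ * N ^ 2) = α / 2 := by
    rw [hη]; field_simp
  have hsq : 8 * lam * (μ * N ^ 2) * (β + 2 * (μ * N ^ 2)) ≤ α ^ 2 := by
    have hs : lam * β + 4 * lam * (μ * N ^ 2) ≤ √(lam * α ^ 2 + lam ^ 2 * β ^ 2) := by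
      rw [le_div_iff₀ (by positivity)] at hcond; nlinarith
    have h2 := pow_le_pow_left₀ (by positivity) hs 2
    rw [Real.sq_sqrt (by positivity)] at h2
    nlinarith
  constructor
  · calc μ * n ^ 2 ≤ μ * N ^ 2 := hn2
      _ ≤ η * α / 4 := by
        rw [hη, div_mul_eq_mul_div, div_div, le_div_iff₀ (by positivity)]; nlinarith
  · calc lam * η * (β + 2 * μ * n ^ 2) ≤ lam * η * (β + 2 * μ * N ^ 2) := by gcongr
      _ = α / 2 := hlamη

theorem quadratic_error_le {α lam μ η L n k D : ℝ} (hμ : 0 ≤ μ) (hη : 0 ≤ η)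
    (hpen : μ * n ^ 2 ≤ η * α / 4) (hlin : lam * η * L ≤ α / 2) (hk₀ : 0 ≤ k) (hk : k ≤ n * D) :
    μ * (1 - 2 * η) * k ^ 2 + lam * η ^ 2 * L / 2 * D ^ 2 ≤ η * α / 2 * D ^ 2 := by
  have hpen' : μ * (1 - 2 * η) * k ^ 2 ≤ η * α / 4 * D ^ 2 :=
    calc μ * (1 - 2 * η) * k ^ 2 ≤ μ * n ^ 2 * D ^ 2 := by
          have := pow_le_pow_left₀ hk₀ hk 2
          nlinarith [mul_nonneg hμ hη, sq_nonneg k]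
      _ ≤ η * α / 4 * D ^ 2 := by gcongr
  have hlin' : lam * η ^ 2 * L / 2 * D ^ 2 ≤ η * α / 4 * D ^ 2 := by
    have hcoef : lam * η ^ 2 * L / 2 ≤ η * α / 4 := by
      nlinarith [mul_le_mul_of_nonneg_left hlin hη]
    exact mul_le_mul_of_nonneg_right hcoef (sq_nonneg _)
  linarith

theorem IsClosed.exists_forall_norm_sub_le {F : Type*} [NormedAddCommGroup F] [ProperSpace F]
    {s : Set F} (hs : IsClosed s) (hne : s.Nonempty) (x : F) :
    ∃ y ∈ s, ∀ z ∈ s, ‖x - y‖ ≤ ‖x - z‖ := by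
  obtain ⟨y, hy, hd⟩ := hs.exists_infDist_eq_dist hne x
  refine ⟨y, hy, fun z hz => ?_⟩
  rw [← dist_eq_norm, ← dist_eq_norm, ← hd]
  exact Metric.infDist_le_dist_of_mem hz

section Setting

variable {E₁ E₂ : Type*} [NormedAddCommGroup E₁] [InnerProductSpace ℝ E₁]
  [NormedAddCommGroup E₂] [InnerProductSpace ℝ E₂]
  {f : E₁ → ℝ} {A : E₁ →L[ℝ] E₂} {ρ : ℝ} {RQ : WithLp 2 (E₁ × E₂) → EReal}

-- `xPart` and `yPart` are definitionally `WithLp.fst` and `WithLp.snd`.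
theorem norm_Kmap_le (A : E₁ →L[ℝ] E₂) : ‖Kmap A‖ ≤ ‖A‖ + 1 := by
  refine ContinuousLinearMap.opNorm_le_bound _ (by positivity) fun p => ?_
  calc ‖Kmap A p‖ = ‖A p.fst - p.snd‖ := rfl
    _ ≤ ‖A‖ * ‖p.fst‖ + ‖p.snd‖ := (norm_sub_le _ _).trans (by gcongr; exact A.le_opNorm _)
    _ ≤ ‖A‖ * ‖p‖ + ‖p‖ := by gcongr <;> simp [WithLp.norm_fst_le, WithLp.norm_snd_le]
    _ = (‖A‖ + 1) * ‖p‖ := by ring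

theorem ERConvexOn.xPart_add_yPart {RX : E₁ → EReal} {RY : E₂ → EReal} (hX : ERConvexOn RX)
    (hY : ERConvexOn RY) : ERConvexOn fun q : WithLp 2 (E₁ × E₂) => RX (xPart q) + RY (yPart q) :=
  (hX.comp_linearMap (WithLp.fstₗ 2 ℝ E₁ E₂)).add (hY.comp_linearMap (WithLp.sndₗ 2 ℝ E₁ E₂))

theorem LowerSemicontinuous.xPart_add_yPart {RX : E₁ → EReal} {RY : E₂ → EReal}
    (hX : LowerSemicontinuous RX) (hY : LowerSemicontinuous RY) (hX' : ∀ x, RX x ≠ ⊥)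
    (hY' : ∀ y, RY y ≠ ⊥) :
    LowerSemicontinuous fun q : WithLp 2 (E₁ × E₂) => RX (xPart q) + RY (yPart q) :=
  (hX.comp (WithLp.fstL 2 ℝ E₁ E₂).continuous).add_of_ne_bot
    (hY.comp (WithLp.sndL 2 ℝ E₁ E₂).continuous) (fun _ => hX' _) (fun _ => hY' _)

theorem lowerSemicontinuous_hOP (hf : Continuous f) (hR : LowerSemicontinuous RQ)
    (hR' : ∀ q, RQ q ≠ ⊥) : LowerSemicontinuous (hOP f RQ) :=
  LowerSemicontinuous.add_of_ne_bot
    (continuous_coe_real_ereal.comp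
      (hf.comp (WithLp.fstL 2 ℝ E₁ E₂).continuous)).lowerSemicontinuous
    hR (fun _ => EReal.coe_ne_bot _) hR'

theorem isClosed_OptSet (h : LowerSemicontinuous (hOP f RQ)) : IsClosed (OptSet f RQ A) := by
  have hrepr : OptSet f RQ A =
      Kmap A ⁻¹' {0} ∩ ⋂ p ∈ Kmap A ⁻¹' {0}, {q | hOP f RQ q ≤ hOP f RQ p} := by
    ext q; simp [OptSet]
  rw [hrepr]
  exact (isClosed_singleton.preimage (Kmap A).continuous).inter
    (isClosed_biInter fun p _ => h.isClosed_preimage _)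

theorem AL_of_Kmap_eq_zero {p : WithLp 2 (E₁ × E₂)} (hp : Kmap A p = 0) (w : E₂) :
    AL f RQ A ρ p w = hOP f RQ p := by
  simp [AL, hp]

theorem AL_eq_coe {p : WithLp 2 (E₁ × E₂)} {r : ℝ} (hp : RQ p = r) (w : E₂) :
    AL f RQ A ρ p w = (SAL f A ρ p w + r : ℝ) := by
  simp only [AL, hOP, SAL, hp, ← EReal.coe_add]
  ring_nf

theorem IsSaddle.Kmap_eq_zero {qs : WithLp 2 (E₁ × E₂)} {ws : E₂} {L : ℝ}
    (hs : IsSaddle f RQ A ρ qs ws) (hL : AL f RQ A ρ qs ws = L) : Kmap A qs = 0 := by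
  set c : ℝ := ⟪ws, Kmap A qs⟫ + ρ / 2 * ‖Kmap A qs‖ ^ 2
  have hh : hOP f RQ qs = (L - c : ℝ) := EReal.eq_coe_sub_of_add_coe_eq hL
  -- raising the multiplier along `𝒦 qs` raises `L_ρ` by `‖𝒦 qs‖²`
  have hmax := (hs qs (ws + Kmap A qs)).1
  simp only [AL, hh, ← EReal.coe_add, EReal.coe_le_coe_iff, inner_add_left,
    real_inner_self_eq_norm_sq] at hmax
  have : ‖Kmap A qs‖ ^ 2 ≤ 0 := by linarith
  exact norm_eq_zero.1 (by nlinarith [norm_nonneg (Kmap A qs)])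

theorem IsSaddle.mem_OptSet {qs : WithLp 2 (E₁ × E₂)} {ws : E₂} (hs : IsSaddle f RQ A ρ qs ws)
    (hK : Kmap A qs = 0) : qs ∈ OptSet f RQ A := by
  refine ⟨hK, fun p hp => ?_⟩
  simpa only [AL_of_Kmap_eq_zero hK, AL_of_Kmap_eq_zero hp] using (hs p ws).2

theorem hOP_eq_of_mem_OptSet {p p' : WithLp 2 (E₁ × E₂)} (hp : p ∈ OptSet f RQ A)
    (hp' : p' ∈ OptSet f RQ A) : hOP f RQ p = hOP f RQ p' :=
  le_antisymm (hp.2 p' hp'.1) (hp'.2 p hp.1)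

theorem IsSaddle.RQ_eq_of_mem_OptSet {qs p : WithLp 2 (E₁ × E₂)} {ws : E₂} {L : ℝ}
    (hs : IsSaddle f RQ A ρ qs ws) (hL : AL f RQ A ρ qs ws = L) (hp : p ∈ OptSet f RQ A) :
    RQ p = (L - f (xPart p) : ℝ) := by
  have hK := hs.Kmap_eq_zero hL
  have hvalue : hOP f RQ p = L := by
    rw [hOP_eq_of_mem_OptSet hp (hs.mem_OptSet hK), ← hL, AL_of_Kmap_eq_zero hK]
  exact EReal.eq_coe_sub_of_add_coe_eq ((add_comm _ _).trans hvalue)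

theorem SAL_add_smul_Kmap (q : WithLp 2 (E₁ × E₂)) (w : E₂) (c : ℝ) :
    SAL f A ρ q (w + c • Kmap A q) = SAL f A ρ q w + c * ‖Kmap A q‖ ^ 2 := by
  simp only [SAL, inner_add_left, real_inner_smul_left, real_inner_self_eq_norm_sq]
  ring

end Setting

section Gradient

variable {E₁ E₂ : Type*}
  [NormedAddCommGroup E₁] [InnerProductSpace ℝ E₁] [FiniteDimensional ℝ E₁]
  [NormedAddCommGroup E₂] [InnerProductSpace ℝ E₂] [FiniteDimensional ℝ E₂]
  {f : E₁ → ℝ} {A : E₁ →L[ℝ] E₂} {ρ μ : ℝ}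

/-- `∇_q S(q,w) + 2μ𝒦*(𝒦q)`, the linear term of the oracle's model `Φ_λ`. -/
noncomputable def gradAug (f : E₁ → ℝ) (A : E₁ →L[ℝ] E₂) (ρ μ : ℝ) (q : WithLp 2 (E₁ × E₂))
    (w : E₂) : WithLp 2 (E₁ × E₂) :=
  gradS f A ρ q w + (2 * μ) • (ContinuousLinearMap.adjoint (Kmap A)) (Kmap A q)

theorem hasGradientAt_SAL (hf : Differentiable ℝ f) (q : WithLp 2 (E₁ × E₂)) (w : E₂) :
    HasGradientAt (SAL f A ρ · w) (gradS f A ρ q w) q := by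
  refine DifferentiableAt.hasGradientAt ?_
  have hx : DifferentiableAt ℝ (fun q' : WithLp 2 (E₁ × E₂) => f (xPart q')) q :=
    (hf _).comp q (WithLp.fstL 2 ℝ E₁ E₂).differentiableAt
  exact (hx.add ((differentiableAt_const w).inner ℝ (Kmap A).differentiableAt)).add
    (hasGradientAt_const_mul_norm_sq_apply (Kmap A) (ρ / 2) q).differentiableAt

theorem hasGradientAt_gradAug (hf : Differentiable ℝ f) (q : WithLp 2 (E₁ × E₂)) (w : E₂) :
    HasGradientAt (fun p => SAL f A ρ p w + μ * ‖Kmap A p‖ ^ 2) (gradAug f A ρ μ q w) q := by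
  rw [hasGradientAt_iff_hasFDerivAt, gradAug, map_add]
  exact ((hasGradientAt_SAL hf q w).hasFDerivAt).add
    (hasGradientAt_const_mul_norm_sq_apply (Kmap A) μ q).hasFDerivAt

theorem norm_gradAug_sub_le {βS : ℝ} {w : E₂}
    (hβS : ∀ q₁ q₂, ‖gradS f A ρ q₁ w - gradS f A ρ q₂ w‖ ≤ βS * ‖q₁ - q₂‖) (hμ : 0 ≤ μ)
    (q₁ q₂ : WithLp 2 (E₁ × E₂)) :
    ‖gradAug f A ρ μ q₁ w - gradAug f A ρ μ q₂ w‖ ≤ (βS + 2 * μ * ‖Kmap A‖ ^ 2) * ‖q₁ - q₂‖ := by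
  have hpen : ‖(2 * μ) • (ContinuousLinearMap.adjoint (Kmap A)) (Kmap A (q₁ - q₂))‖ ≤
      2 * μ * ‖Kmap A‖ ^ 2 * ‖q₁ - q₂‖ := by
    rw [norm_smul, Real.norm_of_nonneg (by positivity), mul_assoc (2 * μ)]
    exact mul_le_mul_of_nonneg_left (norm_adjoint_apply_apply_le (Kmap A) _) (by positivity)
  calc ‖gradAug f A ρ μ q₁ w - gradAug f A ρ μ q₂ w‖
      = ‖(gradS f A ρ q₁ w - gradS f A ρ q₂ w) +
          (2 * μ) • (ContinuousLinearMap.adjoint (Kmap A)) (Kmap A (q₁ - q₂))‖ := by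
        simp only [gradAug, map_sub, smul_sub]; abel_nf
    _ ≤ βS * ‖q₁ - q₂‖ + 2 * μ * ‖Kmap A‖ ^ 2 * ‖q₁ - q₂‖ :=
        (norm_add_le _ _).trans (add_le_add (hβS q₁ q₂) hpen)
    _ = (βS + 2 * μ * ‖Kmap A‖ ^ 2) * ‖q₁ - q₂‖ := by ring

theorem SAL_update_le {βS : ℝ} {w : E₂} (hf : Differentiable ℝ f)
    (hβS : ∀ q₁ q₂, ‖gradS f A ρ q₁ w - gradS f A ρ q₂ w‖ ≤ βS * ‖q₁ - q₂‖) (hμ : 0 ≤ μ)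
    (q q' : WithLp 2 (E₁ × E₂)) :
    SAL f A ρ q' (w + μ • Kmap A q') ≤ SAL f A ρ q w + μ * ‖Kmap A q‖ ^ 2 +
      ⟪gradAug f A ρ μ q w, q' - q⟫ + (βS + 2 * μ * ‖Kmap A‖ ^ 2) / 2 * ‖q' - q‖ ^ 2 := by
  rw [SAL_add_smul_Kmap]
  exact le_add_inner_add_of_lipschitz_gradient (hasGradientAt_gradAug hf · w)
    (norm_gradAug_sub_le hβS hμ) q q'

theorem inner_sub_gradAug_of_Kmap_eq_zero {p : WithLp 2 (E₁ × E₂)} (hp : Kmap A p = 0)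
    (q : WithLp 2 (E₁ × E₂)) (w : E₂) :
    ⟪p - q, gradAug f A ρ μ q w⟫ = ⟪p - q, gradS f A ρ q w⟫ - 2 * μ * ‖Kmap A q‖ ^ 2 := by
  rw [gradAug, inner_add_right, real_inner_smul_right, ContinuousLinearMap.adjoint_inner_right,
    map_sub, hp, zero_sub, inner_neg_left, real_inner_self_eq_norm_sq]
  ring

theorem gap_succ_le {βS αS lam η Lstar : ℝ} {RQ : WithLp 2 (E₁ × E₂) → EReal}
    (hf : Differentiable ℝ f) (hμ : 0 ≤ μ) (hη₀ : 0 ≤ η) (hη₁ : η ≤ 1)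
    (hRQ : ∀ p, RQ p ≠ ⊥) (hRQconv : ERConvexOn RQ)
    (hpen : μ * ‖Kmap A‖ ^ 2 ≤ η * αS / 4)
    (hlin : lam * η * (βS + 2 * μ * ‖Kmap A‖ ^ 2) ≤ αS / 2)
    {q v p q' : WithLp 2 (E₁ × E₂)} {w w' : E₂}
    (hβS : ∀ q₁ q₂, ‖gradS f A ρ q₁ w - gradS f A ρ q₂ w‖ ≤ βS * ‖q₁ - q₂‖)
    (hq : RQ q ≠ ⊤) (hpK : Kmap A p = 0) (hpval : RQ p = (Lstar - f (xPart p) : ℝ))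
    (hPQG : ⟪p - q, gradS f A ρ q w⟫ ≤
      SAL f A ρ p w - SAL f A ρ q w - αS / 2 * ‖p - q‖ ^ 2)
    (hWPO : RQ v + ((⟪v, gradAug f A ρ μ q w⟫ +
        1 / 2 * (η * (βS + 2 * μ * ‖Kmap A‖ ^ 2)) * ‖v - q‖ ^ 2 : ℝ) : EReal) ≤
      RQ p + ((⟪p, gradAug f A ρ μ q w⟫ +
        lam / 2 * (η * (βS + 2 * μ * ‖Kmap A‖ ^ 2)) * ‖p - q‖ ^ 2 : ℝ) : EReal))
    (hq' : q' = (1 - η) • q + η • v) (hw' : w' = w + μ • Kmap A q') :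
    RQ q' ≠ ⊤ ∧ SAL f A ρ q' w' + (RQ q').toReal - Lstar ≤
      (1 - η) * (SAL f A ρ q w + (RQ q).toReal - Lstar) := by
  lift RQ q to ℝ using ⟨hq, hRQ q⟩ with a ha
  rw [hpval, ← EReal.coe_add] at hWPO
  have hv : RQ v ≠ ⊤ := fun h => by
    rw [h, EReal.top_add_of_ne_bot (EReal.coe_ne_bot _)] at hWPO
    exact (EReal.coe_lt_top _).not_ge hWPO
  lift RQ v to ℝ using ⟨hv, hRQ v⟩ with b hb
  rw [← EReal.coe_add, EReal.coe_le_coe_iff] at hWPO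
  have hconv := hq' ▸ hRQconv.le_coe ha.symm hb.symm hη₀ hη₁
  have hq'top : RQ q' ≠ ⊤ := ne_top_of_le_ne_top (EReal.coe_ne_top _) hconv
  lift RQ q' to ℝ using ⟨hq'top, hRQ q'⟩ with c hc
  rw [EReal.coe_le_coe_iff] at hconv
  refine ⟨EReal.coe_ne_top c, ?_⟩
  simp only [EReal.toReal_coe]
  have hdescent := SAL_update_le hf hβS hμ q q'
  have hstep : q' - q = η • (v - q) := by rw [hq']; module
  rw [← hw', hstep, real_inner_smul_right, norm_smul, Real.norm_of_nonneg hη₀, mul_pow]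
    at hdescent
  have hSp : SAL f A ρ p w = f (xPart p) := by simp [SAL, hpK]
  have hinner := inner_sub_gradAug_of_Kmap_eq_zero (f := f) (ρ := ρ) (μ := μ) hpK q w
  have hk : ‖Kmap A q‖ ≤ ‖Kmap A‖ * ‖p - q‖ := by
    simpa [hpK, norm_sub_rev] using (Kmap A).le_opNorm (q - p)
  have hrem := quadratic_error_le hμ hη₀ hpen hlin (norm_nonneg _) hk
  rw [inner_sub_left] at hinner
  rw [inner_sub_right, real_inner_comm v, real_inner_comm q] at hdescent
  linear_combination hdescent + η * hWPO + η * hPQG + hrem + hconv + η * hinner + η * hSp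

end Gradient

section

variable {E₁ E₂ : Type*}
  [NormedAddCommGroup E₁] [InnerProductSpace ℝ E₁] [FiniteDimensional ℝ E₁]
  [NormedAddCommGroup E₂] [InnerProductSpace ℝ E₂] [FiniteDimensional ℝ E₂]

theorem linear_rate_general (f : E₁ → ℝ) (ρ : ℝ) (A : E₁ →L[ℝ] E₂)
    (RX : E₁ → EReal) (RY : E₂ → EReal)
    (RQ : WithLp 2 (E₁ × E₂) → EReal) (hRQ : ∀ q, RQ q = RX (xPart q) + RY (yPart q))
    (hRXproper : ProperFun RX) (hRXlsc : LowerSemicontinuous RX) (hRXconv : ERConvexOn RX)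
    (hRYproper : ProperFun RY) (hRYlsc : LowerSemicontinuous RY) (hRYconv : ERConvexOn RY)
    (hdiff : Differentiable ℝ f)
    -- the optimal set is nonempty (it is automatically closed and convex)
    (hPne : (OptSet f RQ A).Nonempty)
    -- `β_S` is a smoothness parameter of `S(·,w)`, independent of `w`
    (βS : ℝ) (hβS0 : 0 ≤ βS)
    (hβS : ∀ w' : E₂, ∀ q₁ q₂ : WithLp 2 (E₁ × E₂),
      ‖gradS f A ρ q₁ w' - gradS f A ρ q₂ w'‖ ≤ βS * ‖q₁ - q₂‖)
    -- the primal quadratic gap property with parameter `α_S > 0`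
    (αS : ℝ) (hαS : 0 < αS)
    (hPQG : ∀ q' : WithLp 2 (E₁ × E₂), RQ q' ≠ ⊤ → ∀ ps ∈ OptSet f RQ A,
      (∀ pt ∈ OptSet f RQ A, ‖q' - ps‖ ≤ ‖q' - pt‖) → ∀ w' : E₂,
        ⟪ps - q', gradS f A ρ q' w'⟫ ≤
          SAL f A ρ ps w' - SAL f A ρ q' w' - αS / 2 * ‖ps - q'‖ ^ 2)
    -- a saddle point, with (common) saddle value `L_ρ*`
    (qsad : WithLp 2 (E₁ × E₂)) (wsad : E₂) (hsaddle : IsSaddle f RQ A ρ qsad wsad)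
    (Lstar : ℝ) (hLstar : AL f RQ A ρ qsad wsad = (Lstar : EReal))
    -- the step sizes
    (lam : ℝ) (hlam : 1 ≤ lam) (μ : ℝ) (hμ : 0 < μ)
    (hμcond : 2 * μ * (‖A‖ + 1) ^ 2 ≤
      (Real.sqrt (lam * αS ^ 2 + lam ^ 2 * βS ^ 2) - lam * βS) / (2 * lam))
    (η : ℝ) (hη : η = αS / (2 * lam * (βS + 2 * μ * (‖A‖ + 1) ^ 2)))
    (hη0 : 0 < η) (hη1 : η ≤ 1)
    -- the algorithm
    (q v : ℕ → WithLp 2 (E₁ × E₂)) (w : ℕ → E₂)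
    (hq0 : RQ (q 0) ≠ ⊤)
    -- the weak proximal oracle condition at `(q_t, w_t)`
    (hWPO : ∀ t : ℕ, ∀ ps ∈ OptSet f RQ A,
      RQ (v t) + ((⟪v t, gradS f A ρ (q t) (w t) + (2 * μ) •
            (ContinuousLinearMap.adjoint (Kmap A)) (Kmap A (q t))⟫ +
          1 / 2 * (η * (βS + 2 * μ * ‖Kmap A‖ ^ 2)) * ‖v t - q t‖ ^ 2 : ℝ) : EReal) ≤
      RQ ps + ((⟪ps, gradS f A ρ (q t) (w t) + (2 * μ) •
            (ContinuousLinearMap.adjoint (Kmap A)) (Kmap A (q t))⟫ +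
          lam / 2 * (η * (βS + 2 * μ * ‖Kmap A‖ ^ 2)) * ‖ps - q t‖ ^ 2 : ℝ) : EReal))
    (hqstep : ∀ t : ℕ, q (t + 1) = (1 - η) • q t + η • v t)
    (hwstep : ∀ t : ℕ, w (t + 1) = w t + μ • Kmap A (q (t + 1))) :
    ∀ t : ℕ, 1 ≤ t →
      AL f RQ A ρ (q (t + 1)) (w (t + 1)) - (Lstar : EReal) ≤
        (((1 - η) ^ t : ℝ) : EReal) * (AL f RQ A ρ (q 1) (w 1) - (Lstar : EReal)) := by
  have hRQbot : ∀ p, RQ p ≠ ⊥ := fun p => by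
    simp [hRQ, EReal.add_eq_bot_iff, hRXproper.2, hRYproper.2]
  have hRQconv : ERConvexOn RQ := funext hRQ ▸ hRXconv.xPart_add_yPart hRYconv
  have hRQlsc : LowerSemicontinuous RQ :=
    funext hRQ ▸ hRXlsc.xPart_add_yPart hRYlsc hRXproper.2 hRYproper.2
  have hclosed : IsClosed (OptSet f RQ A) :=
    isClosed_OptSet (lowerSemicontinuous_hOP hdiff.continuous hRQlsc hRQbot)
  obtain ⟨hpen, hlin⟩ := step_size_bounds hαS hβS0 (by linarith) hμ (by positivity)
    (Kmap A).opNorm_nonneg (norm_Kmap_le A) hμcond hη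
  have hstep : ∀ t, RQ (q t) ≠ ⊤ → RQ (q (t + 1)) ≠ ⊤ ∧
      SAL f A ρ (q (t + 1)) (w (t + 1)) + (RQ (q (t + 1))).toReal - Lstar ≤
        (1 - η) * (SAL f A ρ (q t) (w t) + (RQ (q t)).toReal - Lstar) := fun t ht => by
    obtain ⟨p, hp, hnear⟩ := hclosed.exists_forall_norm_sub_le hPne (q t)
    exact gap_succ_le hdiff hμ.le hη0.le hη1 hRQbot hRQconv hpen hlin (hβS (w t)) ht hp.1
      (hsaddle.RQ_eq_of_mem_OptSet hLstar hp) (hPQG _ ht p hp hnear (w t)) (hWPO t p hp)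
      (hqstep t) (hwstep t)
  have hfin : ∀ t, RQ (q t) ≠ ⊤ := Nat.rec hq0 fun t ht => (hstep t ht).1
  intro t _
  rw [AL_eq_coe (EReal.coe_toReal (hfin _) (hRQbot _)).symm,
    AL_eq_coe (EReal.coe_toReal (hfin _) (hRQbot _)).symm]
  exact_mod_cast le_geom (u := fun s => SAL f A ρ (q (s + 1)) (w (s + 1)) +
      (RQ (q (s + 1))).toReal - Lstar) (sub_nonneg.2 hη1) t
    fun s _ => (hstep (s + 1) (hfin _)).2

/-- linear decay of the augmented Lagrangian gap: under the primal
quadratic gap property and the weak proximal oracle updates, with the prescribed step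
sizes, `d_{t+1} ≤ (1−η)ᵗ d₁` for every `t ≥ 1`, where
`d_t := L_ρ(q_t,w_t) − L_ρ*`. -/
theorem linear_rate (f : E₁ → ℝ) (β ρ : ℝ) (hρ : 0 < ρ) (A : E₁ →L[ℝ] E₂)
    (RX : E₁ → EReal) (RY : E₂ → EReal)
    (RQ : WithLp 2 (E₁ × E₂) → EReal) (hRQ : ∀ q, RQ q = RX (xPart q) + RY (yPart q))
    (hRXproper : ProperFun RX) (hRXlsc : LowerSemicontinuous RX) (hRXconv : ERConvexOn RX)
    (hRYproper : ProperFun RY) (hRYlsc : LowerSemicontinuous RY) (hRYconv : ERConvexOn RY)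
    (hconv : ConvexOn ℝ Set.univ f) (hdiff : Differentiable ℝ f)
    (hsmooth : ∀ x₁ x₂ : E₁, ‖gradient f x₁ - gradient f x₂‖ ≤ β * ‖x₁ - x₂‖)
    -- the optimal set is nonempty (it is automatically closed and convex)
    (hPne : (OptSet f RQ A).Nonempty)
    -- `β_S` is a smoothness parameter of `S(·,w)`, independent of `w`
    (βS : ℝ) (hβS0 : 0 ≤ βS)
    (hβS : ∀ w' : E₂, ∀ q₁ q₂ : WithLp 2 (E₁ × E₂),
      ‖gradS f A ρ q₁ w' - gradS f A ρ q₂ w'‖ ≤ βS * ‖q₁ - q₂‖)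
    -- the primal quadratic gap property with parameter `α_S > 0`
    (αS : ℝ) (hαS : 0 < αS)
    (hPQG : ∀ q' : WithLp 2 (E₁ × E₂), RQ q' ≠ ⊤ → ∀ ps ∈ OptSet f RQ A,
      (∀ pt ∈ OptSet f RQ A, ‖q' - ps‖ ≤ ‖q' - pt‖) → ∀ w' : E₂,
        ⟪ps - q', gradS f A ρ q' w'⟫ ≤
          SAL f A ρ ps w' - SAL f A ρ q' w' - αS / 2 * ‖ps - q'‖ ^ 2)
    -- a saddle point, with (common) saddle value `L_ρ*`
    (qsad : WithLp 2 (E₁ × E₂)) (wsad : E₂) (hsaddle : IsSaddle f RQ A ρ qsad wsad)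
    (Lstar : ℝ) (hLstar : AL f RQ A ρ qsad wsad = (Lstar : EReal))
    -- the step sizes
    (lam : ℝ) (hlam : 1 ≤ lam) (μ : ℝ) (hμ : 0 < μ)
    (hμcond : 2 * μ * (‖A‖ + 1) ^ 2 ≤
      (Real.sqrt (lam * αS ^ 2 + lam ^ 2 * βS ^ 2) - lam * βS) / (2 * lam))
    (η : ℝ) (hη : η = αS / (2 * lam * (βS + 2 * μ * (‖A‖ + 1) ^ 2)))
    (hη0 : 0 < η) (hη1 : η ≤ 1)
    -- the algorithm
    (q v : ℕ → WithLp 2 (E₁ × E₂)) (w : ℕ → E₂)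
    (hq0 : RQ (q 0) ≠ ⊤)
    -- the weak proximal oracle condition at `(q_t, w_t)`
    (hWPO : ∀ t : ℕ, ∀ ps ∈ OptSet f RQ A,
      RQ (v t) + ((⟪v t, gradS f A ρ (q t) (w t) + (2 * μ) •
            (ContinuousLinearMap.adjoint (Kmap A)) (Kmap A (q t))⟫ +
          1 / 2 * (η * (βS + 2 * μ * ‖Kmap A‖ ^ 2)) * ‖v t - q t‖ ^ 2 : ℝ) : EReal) ≤
      RQ ps + ((⟪ps, gradS f A ρ (q t) (w t) + (2 * μ) •
            (ContinuousLinearMap.adjoint (Kmap A)) (Kmap A (q t))⟫ +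
          lam / 2 * (η * (βS + 2 * μ * ‖Kmap A‖ ^ 2)) * ‖ps - q t‖ ^ 2 : ℝ) : EReal))
    (hqstep : ∀ t : ℕ, q (t + 1) = (1 - η) • q t + η • v t)
    (hwstep : ∀ t : ℕ, w (t + 1) = w t + μ • Kmap A (q (t + 1))) :
    ∀ t : ℕ, 1 ≤ t →
      AL f RQ A ρ (q (t + 1)) (w (t + 1)) - (Lstar : EReal) ≤
        (((1 - η) ^ t : ℝ) : EReal) * (AL f RQ A ρ (q 1) (w 1) - (Lstar : EReal)) :=
  linear_rate_general f ρ A RX RY RQ hRQ hRXproper hRXlsc hRXconv hRYproper hRYlsc hRYconv hdiff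
    hPne βS hβS0 hβS αS hαS hPQG qsad wsad hsaddle Lstar hLstar lam hlam μ hμ hμcond η hη hη0 hη1 q
    v w hq0 hWPO hqstep hwstep

end
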